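/- For natural numbers n and j with j ≤ n and complex number a such that (2a+j)_k ≠ 0 for 0 ≤ k ≤ 2n, ∑_{k=0}^{2n} (-2n)_k (a)_k 2^k / ((2a+j)_k k!) = (2^{2n} (1/2)_n / (2a+j)_{2n}) · ∑_{r=0}^{⌊j/2⌋} (-1)^r C(j,2r) (-n)_r (a+j)_{n-r}. -/

import Mathlib

open Finset

/-- The Pochhammer symbol (rising factorial) `(x)_k = x (x+1) ⋯ (x+k-1)`. -/
noncomputable def poch (x : ℂ) (k : ℕ) : ℂ := (ascPochhammer ℂ k).eval x

/-!
Multiplying by `(2a+j)_{2n}` and expanding `2^k` binomially, the inner sums collapse by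
Chu–Vandermonde, and the left side becomes the alternating convolution
`∑ (-1)^i C(2n,i) (a)_i (a+j)_{2n-i}`. Writing `a = (a+j) - j` and expanding `(a)_i` once more by
Vandermonde reduces this to the Kummer sums `T_b(N) = ∑ (-1)^i C(N,i) (b)_i (b)_{N-i}` with
`b = a + j`. These satisfy `T_b(N+2) = (N+1)(N+2b) T_b(N)`, so they vanish for odd `N` and
`T_b(2m) = (2m)!/m! · (b)_m`.
-/

open Polynomial

lemma descPochhammer_smeval_eq_eval {R : Type*} [CommRing R] (r : R) (k : ℕ) :
    (descPochhammer ℤ k).smeval r = (descPochhammer R k).eval r := by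
  rw [← aeval_eq_smeval, aeval_def, ← eval_map, descPochhammer_map]

lemma descPochhammer_eval_add {R : Type*} [CommRing R] (r s : R) (k : ℕ) :
    (descPochhammer R k).eval (r + s) = ∑ p ∈ antidiagonal k,
      k.choose p.1 * ((descPochhammer R p.1).eval r * (descPochhammer R p.2).eval s) := by
  simpa only [descPochhammer_smeval_eq_eval] using
    Ring.descPochhammer_smeval_add k (Commute.all r s)

lemma sum_antidiagonal_choose_mul_sum_antidiagonal_choose {R : Type*} [CommSemiring R] (N : ℕ)
    (f : ℕ → ℕ → ℕ → R) :
    ∑ p ∈ antidiagonal N, (N.choose p.1 : R) *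
        ∑ q ∈ antidiagonal p.1, (p.1.choose q.1 : R) * f q.1 q.2 p.2
      = ∑ p ∈ antidiagonal N, (N.choose p.1 : R) *
          ∑ q ∈ antidiagonal p.2, (p.2.choose q.1 : R) * f p.1 q.1 q.2 := by
  simp only [mul_sum, sum_sigma']
  refine sum_nbij' (fun x ↦ ⟨(x.2.1, x.2.2 + x.1.2), (x.2.2, x.1.2)⟩)
    (fun x ↦ ⟨(x.1.1 + x.2.1, x.2.2), (x.1.1, x.2.1)⟩) ?_ ?_ ?_ ?_ ?_
  · rintro ⟨⟨k, m⟩, ⟨i, l⟩⟩; simp; omega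
  · rintro ⟨⟨i, p⟩, ⟨l, m⟩⟩; simp; omega
  · rintro ⟨⟨k, m⟩, ⟨i, l⟩⟩; simp
  · rintro ⟨⟨i, p⟩, ⟨l, m⟩⟩; simp
  rintro ⟨⟨k, m⟩, ⟨i, l⟩⟩ h
  simp only [mem_sigma, HasAntidiagonal.mem_antidiagonal] at h
  obtain ⟨rfl, rfl⟩ := h
  have h := Nat.choose_mul (n := i + l + m) (Nat.le_add_right i l)
  simp only [add_tsub_cancel_left, add_assoc] at h ⊢
  rw [← mul_assoc, ← mul_assoc, ← Nat.cast_mul, h, Nat.cast_mul]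

lemma sum_antidiagonal_two_mul_eq_sum_range {M : Type*} [AddCommMonoid M] (n : ℕ)
    (f : ℕ × ℕ → M) (hf : ∀ p ∈ antidiagonal (2 * n), Odd p.2 → f p = 0) :
    ∑ p ∈ antidiagonal (2 * n), f p = ∑ r ∈ range (n + 1), f (2 * r, 2 * (n - r)) := by
  have hinj : Set.InjOn (fun r => (2 * r, 2 * (n - r))) (range (n + 1)) := by
    intro r _ r' _ h; simp only [Prod.mk.injEq] at h; omega
  rw [← sum_image hinj]
  refine (sum_subset (fun p hp => ?_) fun p hp hp' => hf p hp ?_).symm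
  · obtain ⟨r, hr, rfl⟩ := mem_image.1 hp
    rw [mem_range] at hr
    rw [HasAntidiagonal.mem_antidiagonal]; omega
  · rw [HasAntidiagonal.mem_antidiagonal] at hp
    by_contra hodd
    obtain ⟨m, hm⟩ := Nat.not_odd_iff_even.1 hodd
    exact hp' (mem_image.2 ⟨n - m, mem_range.2 (by omega), by ext <;> simp <;> omega⟩)

lemma sum_range_eq_sum_range_of_eq_zero {M : Type*} [AddCommMonoid M] {f : ℕ → M} {m m' : ℕ}
    (hf : ∀ k, min m m' ≤ k → f k = 0) :
    ∑ k ∈ range m, f k = ∑ k ∈ range m', f k := by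
  have h (l : ℕ) (hl : min m m' ≤ l) :
      ∑ k ∈ range (min m m'), f k = ∑ k ∈ range l, f k :=
    sum_subset (range_subset_range.2 hl) fun k _ hk => hf k (by simp at hk; omega)
  rw [← h m (min_le_left _ _), ← h m' (min_le_right _ _)]

lemma poch_succ (x : ℂ) (k : ℕ) : poch x (k + 1) = poch x k * (x + k) :=
  ascPochhammer_succ_eval k x

lemma poch_add (x : ℂ) (k l : ℕ) : poch x (k + l) = poch x k * poch (x + k) l := by
  simp [poch, ← ascPochhammer_mul, eval_comp]

lemma poch_eq_neg_one_pow_mul_descPochhammer (x : ℂ) (k : ℕ) :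
    poch x k = (-1) ^ k * (descPochhammer ℂ k).eval (-x) := by
  rw [poch, ← ascPochhammer_eval_neg_eq_descPochhammer, neg_neg]

lemma poch_eq_descPochhammer (x : ℂ) (k : ℕ) :
    poch x k = (descPochhammer ℂ k).eval (x + k - 1) := by
  rw [poch, descPochhammer_eval_eq_ascPochhammer]; ring_nf

lemma poch_neg_natCast (N k : ℕ) :
    poch (-(N : ℂ)) k = (-1) ^ k * k.factorial * N.choose k := by
  rw [poch_eq_neg_one_pow_mul_descPochhammer, neg_neg, descPochhammer_eval_eq_descFactorial,
    Nat.descFactorial_eq_factorial_mul_choose, Nat.cast_mul, mul_assoc]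

lemma poch_one_half_mul_two_pow_mul_factorial (n : ℕ) :
    poch (1 / 2) n * 2 ^ (2 * n) * n.factorial = (2 * n).factorial := by
  induction n with
  | zero => simp [poch]
  | succ n ih =>
    rw [show 2 * (n + 1) = 2 * n + 1 + 1 by ring, Nat.factorial_succ, Nat.factorial_succ,
      poch_succ, Nat.factorial_succ, pow_succ, pow_succ]
    push_cast
    linear_combination (4 * (n : ℂ) ^ 2 + 6 * n + 2) * ih

lemma poch_add_eq_sum (x y : ℂ) (N : ℕ) :
    poch (x + y) N = ∑ p ∈ antidiagonal N, N.choose p.1 * (poch x p.1 * poch y p.2) := by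
  simp only [poch_eq_neg_one_pow_mul_descPochhammer, neg_add, descPochhammer_eval_add, mul_sum]
  refine sum_congr rfl fun p hp => ?_
  rw [← mem_antidiagonal.1 hp, pow_add]
  ring

lemma poch_sub_eq_sum (x c : ℂ) (M : ℕ) :
    poch (c - x) M = ∑ p ∈ antidiagonal M,
      M.choose p.1 * ((-1) ^ p.1 * poch x p.1 * poch (c + p.1) p.2) := by
  rw [poch_eq_descPochhammer, show c - x + M - 1 = -x + (c + M - 1) by ring,
    descPochhammer_eval_add]
  refine sum_congr rfl fun p hp => ?_
  rw [poch_eq_neg_one_pow_mul_descPochhammer, poch_eq_descPochhammer, ← mem_antidiagonal.1 hp,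
    Nat.cast_add, ← add_assoc]
  have h : (-1 : ℂ) ^ p.1 * (-1) ^ p.1 = 1 := by rw [← mul_pow]; norm_num
  linear_combination (-((p.1 + p.2).choose p.1 : ℂ) * eval (-x) (descPochhammer ℂ p.1) *
    eval (c + p.1 + p.2 - 1) (descPochhammer ℂ p.2)) * h

noncomputable def pochAltSum (x y : ℂ) (N : ℕ) : ℂ :=
  ∑ p ∈ antidiagonal N, N.choose p.1 * ((-1) ^ p.1 * poch x p.1 * poch y p.2)

lemma sum_choose_mul_two_pow_mul_poch_eq_pochAltSum (a c : ℂ) (N : ℕ) :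
    ∑ p ∈ antidiagonal N,
        N.choose p.1 * ((-1) ^ p.1 * poch a p.1 * 2 ^ p.1 * poch (c + p.1) p.2)
      = pochAltSum a (c - a) N := by
  have two_pow (k : ℕ) : (2 : ℂ) ^ k = ∑ q ∈ antidiagonal k, (k.choose q.1 : ℂ) := by
    simpa [one_add_one_eq_two] using (Commute.one_right (1 : ℂ)).add_pow' k
  calc _ = ∑ p ∈ antidiagonal N, (N.choose p.1 : ℂ) *
          ∑ q ∈ antidiagonal p.1, (p.1.choose q.1 : ℂ) *
          ((-1) ^ (q.1 + q.2) * poch a q.1 * poch (a + q.1) q.2 * poch (c + q.1 + q.2) p.2) := by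
        refine sum_congr rfl fun p _ => ?_
        rw [two_pow, mul_sum, sum_mul]
        congr 1
        refine sum_congr rfl fun q hq => ?_
        rw [← mem_antidiagonal.1 hq, poch_add, Nat.cast_add, ← add_assoc]
        ring
    _ = ∑ p ∈ antidiagonal N, (N.choose p.1 : ℂ) *
          ∑ q ∈ antidiagonal p.2, (p.2.choose q.1 : ℂ) *
          ((-1) ^ (p.1 + q.1) * poch a p.1 * poch (a + p.1) q.1 * poch (c + p.1 + q.1) q.2) :=
        sum_antidiagonal_choose_mul_sum_antidiagonal_choose N fun i l m =>
          (-1) ^ (i + l) * poch a i * poch (a + i) l * poch (c + i + l) m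
    _ = pochAltSum a (c - a) N := by
        refine sum_congr rfl fun p _ => ?_
        rw [show c - a = c + p.1 - (a + p.1) by ring, poch_sub_eq_sum]
        congr 1
        rw [mul_sum]
        refine sum_congr rfl fun q _ => ?_
        rw [pow_add]
        ring

lemma pochAltSum_add_left (x y z : ℂ) (N : ℕ) :
    pochAltSum (x + y) z N
      = ∑ p ∈ antidiagonal N,
          N.choose p.1 * ((-1) ^ p.1 * poch x p.1 * pochAltSum y z p.2) := by
  calc _ = ∑ p ∈ antidiagonal N, (N.choose p.1 : ℂ) *
          ∑ q ∈ antidiagonal p.1, (p.1.choose q.1 : ℂ) *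
          ((-1) ^ (q.1 + q.2) * poch x q.1 * poch y q.2 * poch z p.2) := by
        refine sum_congr rfl fun p _ => ?_
        rw [poch_add_eq_sum, mul_sum, sum_mul]
        congr 1
        refine sum_congr rfl fun q hq => ?_
        rw [← mem_antidiagonal.1 hq]
        ring
    _ = ∑ p ∈ antidiagonal N, (N.choose p.1 : ℂ) *
          ∑ q ∈ antidiagonal p.2, (p.2.choose q.1 : ℂ) *
          ((-1) ^ (p.1 + q.1) * poch x p.1 * poch y q.1 * poch z q.2) :=
        sum_antidiagonal_choose_mul_sum_antidiagonal_choose N fun i l m =>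
          (-1) ^ (i + l) * poch x i * poch y l * poch z m
    _ = _ := by
        refine sum_congr rfl fun p _ => ?_
        rw [pochAltSum]
        congr 1
        rw [mul_sum]
        refine sum_congr rfl fun q _ => ?_
        rw [pow_add]
        ring

noncomputable def pochAltMoment (b : ℂ) (N : ℕ) : ℂ :=
  ∑ p ∈ antidiagonal N, N.choose p.1 * ((-1) ^ p.1 * poch b p.1 * poch b p.2) * p.1

lemma pochAltSum_self_succ (b : ℂ) (N : ℕ) :
    pochAltSum b b (N + 1) = N * pochAltSum b b N - 2 * pochAltMoment b N := by
  rw [pochAltSum, sum_antidiagonal_choose_succ_mul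
    (fun i l => (-1) ^ i * poch b i * poch b l) N, pochAltSum, pochAltMoment, mul_sum, mul_sum,
    ← sum_add_distrib, ← sum_sub_distrib]
  refine sum_congr rfl fun p hp => ?_
  have hN := (mem_antidiagonal.1 hp).symm
  rw [Nat.choose_symm_of_eq_add hN, hN, poch_succ, poch_succ]
  push_cast
  ring

lemma pochAltMoment_succ (b : ℂ) (N : ℕ) :
    pochAltMoment b (N + 1) = -(N + 1) * (b * pochAltSum b b N + pochAltMoment b N) := by
  rw [pochAltMoment, Nat.sum_antidiagonal_succ]
  dsimp only
  rw [Nat.cast_zero, mul_zero, zero_add, pochAltSum, pochAltMoment, mul_sum, ← sum_add_distrib,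
    mul_sum]
  refine sum_congr rfl fun p _ => ?_
  have h : ((N + 1).choose (p.1 + 1) : ℂ) * (p.1 + 1) = (N + 1) * N.choose p.1 := by
    exact_mod_cast (Nat.add_one_mul_choose_eq N p.1).symm
  rw [poch_succ]
  push_cast
  linear_combination (-(-1 : ℂ) ^ p.1 * poch b p.1 * (b + p.1) * poch b p.2) * h

lemma pochAltSum_self_add_two (b : ℂ) (N : ℕ) :
    pochAltSum b b (N + 2) = (N + 1) * (N + 2 * b) * pochAltSum b b N := by
  rw [pochAltSum_self_succ, pochAltSum_self_succ, pochAltMoment_succ]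
  push_cast
  ring

lemma pochAltSum_self_odd (b : ℂ) (m : ℕ) : pochAltSum b b (2 * m + 1) = 0 := by
  induction m with
  | zero => rw [pochAltSum_self_succ]; simp [pochAltMoment]
  | succ m ih => rw [show 2 * (m + 1) + 1 = 2 * m + 1 + 2 by ring, pochAltSum_self_add_two, ih,
      mul_zero]

lemma factorial_mul_pochAltSum_self_even (b : ℂ) (m : ℕ) :
    m.factorial * pochAltSum b b (2 * m) = (2 * m).factorial * poch b m := by
  induction m with
  | zero => simp [pochAltSum, poch]
  | succ m ih =>
    rw [show 2 * (m + 1) = 2 * m + 2 by ring, pochAltSum_self_add_two, poch_succ,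
      Nat.factorial_succ, Nat.factorial_succ, Nat.factorial_succ]
    push_cast
    linear_combination (2 * ((m : ℂ) + 1) * (2 * m + 1) * (b + m)) * ih

lemma choose_mul_poch_neg_mul_pochAltSum_self {n r : ℕ} (hr : r ≤ n) (j : ℕ) (b : ℂ) :
    (2 * n).choose (2 * r) * ((-1) ^ (2 * r) * poch (-(j : ℂ)) (2 * r) *
        pochAltSum b b (2 * (n - r)))
      = 2 ^ (2 * n) * poch (1 / 2) n *
          ((-1) ^ r * j.choose (2 * r) * poch (-(n : ℂ)) r * poch b (n - r)) := by
  have h2n : ((2 * n).choose (2 * r) * (2 * r).factorial * (2 * (n - r)).factorial : ℂ)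
      = (2 * n).factorial := by
    rw [show 2 * (n - r) = 2 * n - 2 * r by omega]
    exact_mod_cast Nat.choose_mul_factorial_mul_factorial (by omega)
  have hn : (n.choose r * r.factorial * (n - r).factorial : ℂ) = n.factorial := by
    exact_mod_cast Nat.choose_mul_factorial_mul_factorial hr
  have hsign : (-1 : ℂ) ^ r * (-1) ^ r = 1 := by rw [← mul_pow]; norm_num
  have hT := factorial_mul_pochAltSum_self_even b (n - r)
  have hP := poch_one_half_mul_two_pow_mul_factorial n
  rw [poch_neg_natCast, poch_neg_natCast, pow_mul, neg_one_sq, one_pow]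
  refine mul_left_cancel₀ (mul_ne_zero (Nat.cast_ne_zero.2 (Nat.factorial_ne_zero n))
    (Nat.cast_ne_zero.2 (Nat.factorial_ne_zero (n - r)))) ?_
  linear_combination
    (n.factorial * (2 * n).choose (2 * r) * (2 * r).factorial * j.choose (2 * r) : ℂ) * hT
    + (n.factorial * j.choose (2 * r) * poch b (n - r) : ℂ) * h2n
    - ((n - r).factorial * j.choose (2 * r) * r.factorial * n.choose r * poch b (n - r) : ℂ) * hP
    - ((n - r).factorial * n.factorial * poch (1 / 2) n * 2 ^ (2 * n) * j.choose (2 * r) *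
        r.factorial * n.choose r * poch b (n - r) : ℂ) * hsign
    - ((2 * n).factorial * j.choose (2 * r) * poch b (n - r) : ℂ) * hn

lemma pochAltSum_add_natCast_two_mul (a : ℂ) (n j : ℕ) :
    pochAltSum a (a + j) (2 * n)
      = 2 ^ (2 * n) * poch (1 / 2) n * ∑ r ∈ range (j / 2 + 1),
          (-1) ^ r * j.choose (2 * r) * poch (-(n : ℂ)) r * poch (a + j) (n - r) := by
  generalize hb : a + (j : ℂ) = b
  obtain rfl : a = -j + b := by rw [← hb]; ring
  rw [pochAltSum_add_left, sum_antidiagonal_two_mul_eq_sum_range]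
  · rw [mul_sum, sum_range_eq_sum_range_of_eq_zero (m := j / 2 + 1) (m' := n + 1)]
    · exact sum_congr rfl fun r hr =>
        choose_mul_poch_neg_mul_pochAltSum_self (Nat.lt_succ_iff.1 (mem_range.1 hr)) j b
    · intro r hr
      rcases le_or_gt r n with hrn | hrn
      · rw [Nat.choose_eq_zero_of_lt (by omega : j < 2 * r)]
        simp
      · rw [poch_neg_natCast, Nat.choose_eq_zero_of_lt hrn]
        simp
  · rintro ⟨s, q⟩ _ ⟨m, rfl⟩
    rw [pochAltSum_self_odd, mul_zero, mul_zero]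

lemma sum_range_poch_div_eq_pochAltSum_div (N : ℕ) (a c : ℂ) (hc : poch c N ≠ 0) :
    ∑ k ∈ range (N + 1), poch (-(N : ℂ)) k * poch a k * 2 ^ k / (poch c k * k.factorial)
      = pochAltSum a (c - a) N / poch c N := by
  rw [← sum_choose_mul_two_pow_mul_poch_eq_pochAltSum, Nat.sum_antidiagonal_eq_sum_range_succ_mk,
    sum_div]
  refine sum_congr rfl fun k hk => ?_
  have hsplit : poch c N = poch c k * poch (c + k) (N - k) := by
    rw [← poch_add, Nat.add_sub_cancel' (Nat.lt_succ_iff.1 (mem_range.1 hk))]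
  rw [hsplit] at hc ⊢
  rw [poch_neg_natCast]
  field_simp [left_ne_zero_of_mul hc, right_ne_zero_of_mul hc,
    Nat.cast_ne_zero.2 k.factorial_ne_zero]

theorem twoF1_neg2n_a_twoApj_general (n j : ℕ) (a : ℂ)
    (h : ∀ k ≤ 2 * n, poch (2 * a + j) k ≠ 0) :
    ∑ k ∈ range (2 * n + 1),
        poch (-(2 * n : ℂ)) k * poch a k * 2 ^ k / (poch (2 * a + j) k * (k.factorial : ℂ))
      = (2 : ℂ) ^ (2 * n) * poch (1 / 2) n / poch (2 * a + j) (2 * n) *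
          ∑ r ∈ range (j / 2 + 1),
            (-1 : ℂ) ^ r * (j.choose (2 * r) : ℂ) * poch (-(n : ℂ)) r * poch (a + j) (n - r) := by
  have hN : -(2 * n : ℂ) = -((2 * n : ℕ) : ℂ) := by push_cast; ring
  rw [hN, sum_range_poch_div_eq_pochAltSum_div _ a _ (h _ le_rfl),
    show 2 * a + j - a = a + j by ring, pochAltSum_add_natCast_two_mul]
  ring

theorem twoF1_neg2n_a_twoApj (n j : ℕ) (hjn : j ≤ n) (a : ℂ)
    (h : ∀ k ≤ 2 * n, poch (2 * a + j) k ≠ 0) :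
    ∑ k ∈ range (2 * n + 1),
        poch (-(2 * n : ℂ)) k * poch a k * 2 ^ k / (poch (2 * a + j) k * (k.factorial : ℂ))
      = (2 : ℂ) ^ (2 * n) * poch (1 / 2) n / poch (2 * a + j) (2 * n) *
          ∑ r ∈ range (j / 2 + 1),
            (-1 : ℂ) ^ r * (j.choose (2 * r) : ℂ) * poch (-(n : ℂ)) r * poch (a + j) (n - r) :=
  twoF1_neg2n_a_twoApj_general n j a h
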